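/- Under the assumption σ̄ = lim_{t→0⁺}(𝔡(t)/Q(t))^{1/2} = ∞, for every s ≥ 0 one has g(s) ≤ ĝ(s), where ĝ(s) := inf_{x∈(0,1]} { 2(Ψ(1) − Ψ(1−x)) + ( φ'(0⁺)·f̂(1−x)·𝔡(x)/Q(x) )^{1/2}·s }. Moreover ĝ is concave, non-decreasing, continuous, ĝ(s) ≤ 2Ψ(1), and lim_{s→0⁺} ĝ(s)/s = ∞. -/

import Mathlib

open Set Filter Topology MeasureTheory intervalIntegral

/-- `u ∈ H¹((0,1))` represented via an a.e. derivative `u′`: `u′ ∈ L²(0,1)` and `u` is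
the integral of `u′` (absolute continuity / FTC representation). -/
def H1on01 (u u₁ : ℝ → ℝ) : Prop :=
  MemLp u₁ 2 (volume.restrict (Ioo (0:ℝ) 1)) ∧
  IntervalIntegrable u₁ volume 0 1 ∧
  ∀ x ∈ Icc (0:ℝ) 1, u x = u 0 + ∫ s in (0:ℝ)..x, u₁ s

/-- `Ψ(t) = ∫₀ᵗ 𝔡(1−τ)^{1/2} dτ`. -/
noncomputable def Psi (dd : ℝ → ℝ) (t : ℝ) : ℝ := ∫ τ in (0:ℝ)..t, Real.sqrt (dd (1 - τ))

/-- `f(t) = (f̂(t)/Q(1−t))^{1/2}`. -/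
noncomputable def fdeg (fhat Q : ℝ → ℝ) (t : ℝ) : ℝ := Real.sqrt (fhat t / Q (1 - t))

/-- The surface energy density
`g(s) = inf { ∫₀¹ (𝔡(1−β)(c f²(β)|γ′|² + |β′|²))^{1/2} : (γ,β) ∈ 𝔘_s }`. -/
noncomputable def surfG (dd fhat Q : ℝ → ℝ) (c : ℝ) (s : ℝ) : ℝ :=
  sInf {y : ℝ | ∃ γ γ₁ β β₁ : ℝ → ℝ,
    H1on01 γ γ₁ ∧ H1on01 β β₁ ∧ γ 0 = 0 ∧ γ 1 = s ∧
    (∀ x ∈ Icc (0:ℝ) 1, β x ∈ Icc (0:ℝ) 1) ∧ β 0 = 1 ∧ β 1 = 1 ∧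
    y = ∫ x in (0:ℝ)..1,
      Real.sqrt (dd (1 - β x) * (c * (fdeg fhat Q (β x))^2 * (γ₁ x)^2 + (β₁ x)^2))}

/-- `ĝ(s) = inf_{x∈(0,1]} { 2(Ψ(1)−Ψ(1−x)) + (c·f̂(1−x)·𝔡(x)/Q(x))^{1/2}·s }`. -/
noncomputable def ghat (dd fhat Q : ℝ → ℝ) (c s : ℝ) : ℝ :=
  sInf {y : ℝ | ∃ x ∈ Ioc (0:ℝ) 1,
    y = 2*(Psi dd 1 - Psi dd (1-x)) + Real.sqrt (c * fhat (1-x) * (dd x / Q x)) * s}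

/-!
For `x ∈ (0,1]`, the profile that lowers `β` from `1` to `1 - x`, then raises `γ` from `0` to `s`
at frozen `β`, then restores `β`, costs `2 ∫₀ˣ √𝔡 = 2(Ψ(1) - Ψ(1-x))` for the two `β`-phases plus
`(c f̂(1-x) 𝔡(x)/Q(x))^{1/2} s` for the `γ`-phase; hence `g ≤ ĝ`. Being a lower envelope of affine
functions with nonnegative intercepts and slopes, `ĝ` is concave, monotone and continuous on
`[0,∞)`; the choice `x = 1` has slope `0` because `f̂(0) = 0`, whence `ĝ ≤ 2Ψ(1)`. Since `σ̄ = ∞`,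
the slopes blow up as `x → 0⁺`, while the intercepts stay away from `0` for `x` away from `0`;
so `ĝ(s)/s → ∞`.
-/

section LowerEnvelope

variable {ι : Type*} {S : Set ι} {A B : ι → ℝ} {s : ℝ}

noncomputable def lowerEnvelope (S : Set ι) (A B : ι → ℝ) (s : ℝ) : ℝ :=
  sInf {y | ∃ i ∈ S, y = A i + B i * s}

variable (hA : ∀ i ∈ S, 0 ≤ A i) (hB : ∀ i ∈ S, 0 ≤ B i)
include hA hB

lemma lowerEnvelope_le (hs : 0 ≤ s) {i : ι} (hi : i ∈ S) :
    lowerEnvelope S A B s ≤ A i + B i * s := by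
  refine csInf_le ⟨0, ?_⟩ ⟨i, hi, rfl⟩
  rintro _ ⟨j, hj, rfl⟩
  exact add_nonneg (hA j hj) (mul_nonneg (hB j hj) hs)

omit hA hB in
lemma le_lowerEnvelope (hS : S.Nonempty) {a : ℝ} (h : ∀ i ∈ S, a ≤ A i + B i * s) :
    a ≤ lowerEnvelope S A B s := by
  obtain ⟨i, hi⟩ := hS
  exact le_csInf ⟨_, i, hi, rfl⟩ fun _ ⟨j, hj, hy⟩ => hy ▸ h j hj

lemma concaveOn_lowerEnvelope (hS : S.Nonempty) : ConcaveOn ℝ (Ici 0) (lowerEnvelope S A B) := by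
  refine ⟨convex_Ici 0, fun s hs t ht a b ha hb hab => le_lowerEnvelope hS fun i hi => ?_⟩
  calc a • lowerEnvelope S A B s + b • lowerEnvelope S A B t
      ≤ a * (A i + B i * s) + b * (A i + B i * t) :=
        add_le_add (mul_le_mul_of_nonneg_left (lowerEnvelope_le hA hB hs hi) ha)
          (mul_le_mul_of_nonneg_left (lowerEnvelope_le hA hB ht hi) hb)
    _ = A i + B i * (a • s + b • t) := by
        simp only [smul_eq_mul]; linear_combination A i * hab

lemma monotoneOn_lowerEnvelope (hS : S.Nonempty) : MonotoneOn (lowerEnvelope S A B) (Ici 0) :=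
  fun s hs t _ hst => le_lowerEnvelope hS fun i hi =>
    (lowerEnvelope_le hA hB hs hi).trans (by gcongr; exact hB i hi)

/-- At `0`, monotonicity gives the lower bound and each affine majorant the upper one. -/
lemma continuousOn_lowerEnvelope (hS : S.Nonempty) :
    ContinuousOn (lowerEnvelope S A B) (Ici 0) := by
  intro s (hs : 0 ≤ s)
  rcases hs.eq_or_lt with rfl | hs
  · refine tendsto_order.2 ⟨fun a ha => ?_, fun a ha => ?_⟩
    · filter_upwards [self_mem_nhdsWithin] with t ht
      exact ha.trans_le (monotoneOn_lowerEnvelope hA hB hS self_mem_Ici ht ht)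
    · obtain ⟨_, ⟨i, hi, rfl⟩, hia⟩ :=
        exists_lt_of_csInf_lt (s := {y | ∃ i ∈ S, y = A i + B i * 0})
        ⟨_, hS.some, hS.some_mem, rfl⟩ ha
      have hcont : ContinuousWithinAt (fun t => A i + B i * t) (Ici 0) 0 := by fun_prop
      filter_upwards [self_mem_nhdsWithin, hcont.eventually_lt continuousWithinAt_const hia]
        with t ht hlt
      exact (lowerEnvelope_le hA hB ht hi).trans_lt hlt
  · exact ((concaveOn_lowerEnvelope hA hB hS).continuousOn_interior.continuousAt
      (by rw [interior_Ici]; exact Ioi_mem_nhds hs)).continuousWithinAt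

lemma tendsto_lowerEnvelope_div_atTop (hS : S.Nonempty)
    (h : ∀ M, ∃ δ > 0, ∀ i ∈ S, A i < δ → M ≤ B i) :
    Tendsto (fun s => lowerEnvelope S A B s / s) (𝓝[>] 0) atTop := by
  refine tendsto_atTop.2 fun M => ?_
  obtain ⟨δ, hδ, hδM⟩ := h (max M 1)
  have hM : 0 < max M 1 := lt_max_of_lt_right one_pos
  filter_upwards [Ioo_mem_nhdsGT (div_pos hδ hM)] with s ⟨hs, hsδ⟩
  rw [le_div_iff₀ hs]
  refine le_lowerEnvelope hS fun i hi => ?_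
  have hBs := mul_nonneg (hB i hi) hs.le
  rcases lt_or_ge (A i) δ with hAi | hAi
  · nlinarith [hδM i hi hAi, le_max_left M 1, hA i hi]
  · nlinarith [(lt_div_iff₀ hM).1 hsδ, le_max_left M 1]

end LowerEnvelope

lemma Psi_one_sub_Psi_one_sub {dd : ℝ → ℝ} (hdc : ContinuousOn dd (Icc 0 1)) {x : ℝ}
    (hx : x ∈ Icc (0:ℝ) 1) : Psi dd 1 - Psi dd (1 - x) = ∫ u in (0:ℝ)..x, Real.sqrt (dd u) := by
  have hint : ∀ b ∈ Icc (0:ℝ) 1, IntervalIntegrable (fun τ => Real.sqrt (dd (1 - τ))) volume 0 b :=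
    fun b hb => ContinuousOn.intervalIntegrable <| by
      rw [uIcc_of_le hb.1]
      refine (hdc.comp (by fun_prop) fun τ hτ => ?_).sqrt
      constructor <;> linarith [hτ.1, hτ.2, hb.2]
  rw [Psi, Psi, integral_interval_sub_left (hint 1 (by simp))
      (hint _ ⟨by linarith [hx.2], by linarith [hx.1]⟩),
    integral_comp_sub_left (fun u => Real.sqrt (dd u))]
  simp

lemma intervalIntegral_indicator_Ioi_one {a t : ℝ} (ha : 0 ≤ a) (ht : 0 ≤ t) :
    ∫ τ in (0:ℝ)..t, (Ioi a).indicator 1 τ = max (t - a) 0 := by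
  rw [integral_of_le ht, MeasureTheory.integral_indicator measurableSet_Ioi,
    Measure.restrict_restrict measurableSet_Ioi, inter_comm, Ioc_inter_Ioi, max_eq_right ha]
  simp

/-- The continuous function with value `u₀` at `0` and slopes `C`, `C + D`, `C + D + E` on the
pieces cut at `a ≤ b`. -/
def brokenLine (u₀ C D E a b t : ℝ) : ℝ := u₀ + C * t + D * max (t - a) 0 + E * max (t - b) 0

noncomputable def brokenLineSlope (C D E a b t : ℝ) : ℝ :=
  C + D * (Ioi a).indicator 1 t + E * (Ioi b).indicator 1 t

lemma H1on01_brokenLine (u₀ C D E : ℝ) {a b : ℝ} (ha : 0 ≤ a) (hb : 0 ≤ b) :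
    H1on01 (brokenLine u₀ C D E a b) (brokenLineSlope C D E a b) := by
  have hind : ∀ a p q : ℝ, IntervalIntegrable ((Ioi a).indicator (1 : ℝ → ℝ)) volume p q :=
    fun a p q => by
      rw [intervalIntegrable_iff]
      exact (integrableOn_const (C := (1:ℝ)) measure_Ioc_lt_top.ne).indicator measurableSet_Ioi
  have hmem : ∀ a : ℝ, MemLp ((Ioi a).indicator (1 : ℝ → ℝ)) 2 (volume.restrict (Ioo (0:ℝ) 1)) :=
    fun a => (memLp_const (1:ℝ)).indicator measurableSet_Ioi
  refine ⟨((memLp_const C).add ((hmem a).const_mul D)).add ((hmem b).const_mul E),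
    (intervalIntegrable_const.add ((hind a 0 1).const_mul D)).add ((hind b 0 1).const_mul E),
    fun t ht => ?_⟩
  simp only [brokenLineSlope]
  rw [integral_add (intervalIntegrable_const.add ((hind a 0 t).const_mul D))
      ((hind b 0 t).const_mul E), integral_add intervalIntegrable_const ((hind a 0 t).const_mul D),
    intervalIntegral.integral_const_mul, intervalIntegral.integral_const_mul,
    intervalIntegral_indicator_Ioi_one ha ht.1, intervalIntegral_indicator_Ioi_one hb ht.1]
  simp [brokenLine, max_eq_right (neg_nonpos.2 ha), max_eq_right (neg_nonpos.2 hb)]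
  ring

section BrokenLine

variable {u₀ C D E a b t : ℝ}

lemma brokenLine_of_le_left (hab : a ≤ b) (ht : t ≤ a) :
    brokenLine u₀ C D E a b t = u₀ + C * t := by
  simp [brokenLine, max_eq_right (sub_nonpos.2 ht), max_eq_right (sub_nonpos.2 (ht.trans hab))]

lemma brokenLine_of_mem_Icc (ht : t ∈ Icc a b) :
    brokenLine u₀ C D E a b t = u₀ + C * t + D * (t - a) := by
  simp [brokenLine, max_eq_left (sub_nonneg.2 ht.1), max_eq_right (sub_nonpos.2 ht.2)]

lemma brokenLine_of_le_right (hab : a ≤ b) (ht : b ≤ t) :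
    brokenLine u₀ C D E a b t = u₀ + C * t + D * (t - a) + E * (t - b) := by
  simp [brokenLine, max_eq_left (sub_nonneg.2 ht), max_eq_left (sub_nonneg.2 (hab.trans ht))]

lemma brokenLineSlope_of_le_left (hab : a ≤ b) (ht : t ≤ a) :
    brokenLineSlope C D E a b t = C := by
  simp [brokenLineSlope, ht, ht.trans hab]

lemma brokenLineSlope_of_mem_Ioc (ht : t ∈ Ioc a b) : brokenLineSlope C D E a b t = C + D := by
  simp [brokenLineSlope, ht.1, ht.2]

lemma brokenLineSlope_of_lt_right (hab : a ≤ b) (ht : b < t) :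
    brokenLineSlope C D E a b t = C + D + E := by
  simp [brokenLineSlope, ht, hab.trans_lt ht]

end BrokenLine

lemma surfG_le_of_admissible {dd fhat Q : ℝ → ℝ} {c s : ℝ} {γ γ₁ β β₁ : ℝ → ℝ}
    (hγ : H1on01 γ γ₁) (hβ : H1on01 β β₁) (hγ0 : γ 0 = 0) (hγ1 : γ 1 = s)
    (hβmem : ∀ x ∈ Icc (0:ℝ) 1, β x ∈ Icc (0:ℝ) 1) (hβ0 : β 0 = 1) (hβ1 : β 1 = 1) :
    surfG dd fhat Q c s ≤ ∫ x in (0:ℝ)..1,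
      Real.sqrt (dd (1 - β x) * (c * (fdeg fhat Q (β x))^2 * (γ₁ x)^2 + (β₁ x)^2)) := by
  refine csInf_le ⟨0, ?_⟩ ⟨γ, γ₁, β, β₁, hγ, hβ, hγ0, hγ1, hβmem, hβ0, hβ1, rfl⟩
  rintro _ ⟨_, _, _, _, _, _, _, _, _, _, _, rfl⟩
  exact integral_nonneg zero_le_one fun _ _ => Real.sqrt_nonneg _

lemma integral_eq_of_eqOn_Ioo₃ {F g₁ g₂ g₃ : ℝ → ℝ} {a b c d : ℝ} (hab : a ≤ b) (hbc : b ≤ c)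
    (hcd : c ≤ d) (h₁ : EqOn F g₁ (Ioo a b)) (h₂ : EqOn F g₂ (Ioo b c)) (h₃ : EqOn F g₃ (Ioo c d))
    (hg₁ : IntervalIntegrable g₁ volume a b) (hg₂ : IntervalIntegrable g₂ volume b c)
    (hg₃ : IntervalIntegrable g₃ volume c d) :
    ∫ t in a..d, F t = (∫ t in a..b, g₁ t) + (∫ t in b..c, g₂ t) + ∫ t in c..d, g₃ t := by
  rw [← uIoo_of_le hab] at h₁
  rw [← uIoo_of_le hbc] at h₂
  rw [← uIoo_of_le hcd] at h₃
  have hF₁ := hg₁.congr_uIoo fun t ht => (h₁ ht).symm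
  have hF₂ := hg₂.congr_uIoo fun t ht => (h₂ ht).symm
  have hF₃ := hg₃.congr_uIoo fun t ht => (h₃ ht).symm
  rw [← integral_add_adjacent_intervals (hF₁.trans hF₂) hF₃,
    ← integral_add_adjacent_intervals hF₁ hF₂, integral_congr_uIoo h₁, integral_congr_uIoo h₂,
    integral_congr_uIoo h₃]

lemma sqrt_mul_sq_eq_mul_abs (u a : ℝ) : Real.sqrt (u * a ^ 2) = Real.sqrt u * |a| := by
  rw [Real.sqrt_mul' _ (sq_nonneg a), Real.sqrt_sq_eq_abs]

lemma integral_three_mul_comp_three_mul (f : ℝ → ℝ) (x : ℝ) :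
    ∫ τ in (0:ℝ)..1/3, 3 * x * f (3 * x * τ) = ∫ u in (0:ℝ)..x, f u := by
  rw [intervalIntegral.integral_const_mul, ← smul_eq_mul, smul_integral_comp_mul_left f, mul_zero,
    show 3 * x * (1 / 3) = x by ring]

section Profile

variable {x s t : ℝ}

noncomputable def dip (x : ℝ) : ℝ → ℝ := brokenLine 1 (-(3 * x)) (3 * x) (3 * x) (1/3) (2/3)

noncomputable def dipSlope (x : ℝ) : ℝ → ℝ :=
  brokenLineSlope (-(3 * x)) (3 * x) (3 * x) (1/3) (2/3)

noncomputable def ramp (s : ℝ) : ℝ → ℝ := brokenLine 0 0 (3 * s) (-(3 * s)) (1/3) (2/3)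

noncomputable def rampSlope (s : ℝ) : ℝ → ℝ := brokenLineSlope 0 (3 * s) (-(3 * s)) (1/3) (2/3)

lemma dip_of_le (ht : t ≤ 1/3) : dip x t = 1 - 3 * x * t := by
  rw [dip, brokenLine_of_le_left (by norm_num) ht]; ring

lemma dip_of_mem_Icc (ht : t ∈ Icc (1/3 : ℝ) (2/3)) : dip x t = 1 - x := by
  rw [dip, brokenLine_of_mem_Icc ht]; ring

lemma dip_of_ge (ht : 2/3 ≤ t) : dip x t = 1 - 3 * x * (1 - t) := by
  rw [dip, brokenLine_of_le_right (by norm_num) ht]; ring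

lemma dip_mem_Icc (hx : x ∈ Icc (0:ℝ) 1) (ht : t ∈ Icc (0:ℝ) 1) : dip x t ∈ Icc (0:ℝ) 1 := by
  obtain ⟨hx0, hx1⟩ := hx
  obtain ⟨ht0, ht1⟩ := ht
  rcases le_total t (1/3) with h | h
  · rw [dip_of_le h]; constructor <;> nlinarith
  rcases le_total t (2/3) with h' | h'
  · rw [dip_of_mem_Icc ⟨h, h'⟩]; constructor <;> linarith
  · rw [dip_of_ge h']; constructor <;> nlinarith

lemma ramp_zero : ramp s 0 = 0 := by
  rw [ramp, brokenLine_of_le_left (by norm_num) (by norm_num)]; ring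

lemma ramp_one : ramp s 1 = s := by
  rw [ramp, brokenLine_of_le_right (by norm_num) (by norm_num)]; ring

lemma integral_energy_dip_ramp {dd fhat Q : ℝ → ℝ} {c : ℝ} (hdc : ContinuousOn dd (Icc 0 1))
    (hfnn : ∀ t ∈ Icc (0:ℝ) 1, 0 ≤ fhat t) (hQnn : ∀ t ∈ Icc (0:ℝ) 1, 0 ≤ Q t)
    (hs : 0 ≤ s) (hx : x ∈ Ioc (0:ℝ) 1) :
    ∫ t in (0:ℝ)..1, Real.sqrt (dd (1 - dip x t) *
        (c * fdeg fhat Q (dip x t) ^ 2 * rampSlope s t ^ 2 + dipSlope x t ^ 2)) =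
      2 * (∫ u in (0:ℝ)..x, Real.sqrt (dd u)) +
        Real.sqrt (c * fhat (1 - x) * (dd x / Q x)) * s := by
  obtain ⟨hx0, hx1⟩ := hx
  have h12 : (1/3 : ℝ) ≤ 2/3 := by norm_num
  have hfdeg : fdeg fhat Q (1 - x) ^ 2 = fhat (1 - x) / Q x := by
    rw [fdeg, sub_sub_cancel, Real.sq_sqrt
      (div_nonneg (hfnn _ ⟨by linarith, by linarith⟩) (hQnn _ ⟨hx0.le, hx1⟩))]
  have hint : ∀ {a b : ℝ} (φ : ℝ → ℝ), a ≤ b → Continuous φ → MapsTo φ (Icc a b) (Icc 0 1) →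
      IntervalIntegrable (fun τ => 3 * x * Real.sqrt (dd (φ τ))) volume a b :=
    fun φ hab hφ hmaps => ContinuousOn.intervalIntegrable_of_Icc hab
      (continuousOn_const.mul (hdc.comp hφ.continuousOn hmaps).sqrt)
  rw [integral_eq_of_eqOn_Ioo₃ (by norm_num) h12 (by norm_num)
      (g₁ := fun τ => 3 * x * Real.sqrt (dd (3 * x * τ)))
      (g₂ := fun _ => Real.sqrt (c * fhat (1 - x) * (dd x / Q x)) * (3 * s))
      (g₃ := fun τ => 3 * x * Real.sqrt (dd (3 * x * (1 - τ))))]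
  · rw [integral_comp_sub_left (fun τ => 3 * x * Real.sqrt (dd (3 * x * τ))), sub_self,
      show (1:ℝ) - 2/3 = 1/3 by norm_num,
      integral_three_mul_comp_three_mul (fun u => Real.sqrt (dd u)),
      intervalIntegral.integral_const, smul_eq_mul]
    ring
  · intro t ht
    simp only [dip_of_le ht.2.le, rampSlope, dipSlope, brokenLineSlope_of_le_left h12 ht.2.le]
    rw [sub_sub_cancel, zero_pow two_ne_zero, mul_zero, zero_add, sqrt_mul_sq_eq_mul_abs, abs_neg,
      abs_of_pos (by positivity)]
    ring
  · intro t ht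
    simp only [dip_of_mem_Icc (Ioo_subset_Icc_self ht), rampSlope, dipSlope,
      brokenLineSlope_of_mem_Ioc (Ioo_subset_Ioc_self ht), hfdeg]
    rw [sub_sub_cancel, show dd x * (c * (fhat (1 - x) / Q x) * (0 + 3 * s) ^ 2 +
        (-(3 * x) + 3 * x) ^ 2) = c * fhat (1 - x) * (dd x / Q x) * (3 * s) ^ 2 by ring,
      sqrt_mul_sq_eq_mul_abs, abs_of_nonneg (by positivity)]
  · intro t ht
    simp only [dip_of_ge ht.1.le, rampSlope, dipSlope, brokenLineSlope_of_lt_right h12 ht.1]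
    rw [sub_sub_cancel, show 0 + 3 * s + -(3 * s) = 0 by ring,
      show -(3 * x) + 3 * x + 3 * x = 3 * x by ring, zero_pow two_ne_zero, mul_zero, zero_add,
      sqrt_mul_sq_eq_mul_abs, abs_of_pos (by positivity)]
    ring
  · exact hint _ (by norm_num) (by fun_prop) fun t ht =>
      ⟨by nlinarith [ht.1], by nlinarith [ht.2]⟩
  · exact intervalIntegrable_const
  · exact hint _ (by norm_num) (by fun_prop) fun t ht =>
      ⟨by nlinarith [ht.2], by nlinarith [ht.1]⟩

end Profile

/-- The energy of the profile `(ramp s, dip x)` is the `x`-th affine function in the definition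
of `ghat`. -/
lemma surfG_le_of_mem_Ioc {dd fhat Q : ℝ → ℝ} {c s x : ℝ} (hdc : ContinuousOn dd (Icc 0 1))
    (hfnn : ∀ t ∈ Icc (0:ℝ) 1, 0 ≤ fhat t) (hQnn : ∀ t ∈ Icc (0:ℝ) 1, 0 ≤ Q t)
    (hs : 0 ≤ s) (hx : x ∈ Ioc (0:ℝ) 1) :
    surfG dd fhat Q c s ≤
      2 * (Psi dd 1 - Psi dd (1 - x)) + Real.sqrt (c * fhat (1 - x) * (dd x / Q x)) * s := by
  rw [Psi_one_sub_Psi_one_sub hdc ⟨hx.1.le, hx.2⟩,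
    ← integral_energy_dip_ramp hdc hfnn hQnn hs hx]
  exact surfG_le_of_admissible
    (H1on01_brokenLine _ _ _ _ (by norm_num) (by norm_num))
    (H1on01_brokenLine _ _ _ _ (by norm_num) (by norm_num)) ramp_zero ramp_one
    (fun t => dip_mem_Icc ⟨hx.1.le, hx.2⟩) (by rw [dip_of_le (by norm_num)]; ring)
    (by rw [dip_of_ge (by norm_num)]; ring)

section Ghat

variable {dd fhat Q : ℝ → ℝ} {c : ℝ}

lemma ghat_eq_lowerEnvelope (dd fhat Q : ℝ → ℝ) (c : ℝ) :
    ghat dd fhat Q c = lowerEnvelope (Ioc 0 1) (fun x => 2 * (Psi dd 1 - Psi dd (1 - x)))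
      (fun x => Real.sqrt (c * fhat (1 - x) * (dd x / Q x))) := rfl

lemma tendsto_sqrt_mul_div_atTop (hc : 0 < c) (hfc : ContinuousOn fhat (Icc 0 1))
    (hfnn : ∀ t ∈ Icc (0:ℝ) 1, 0 ≤ fhat t) (hf1 : fhat 1 = 1)
    (hσ : Tendsto (fun t => Real.sqrt (dd t / Q t)) (𝓝[>] (0:ℝ)) atTop) :
    Tendsto (fun x => Real.sqrt (c * fhat (1 - x) * (dd x / Q x))) (𝓝[>] 0) atTop := by
  have hIoc : Ioc (0:ℝ) 1 ∈ 𝓝[>] (0:ℝ) := Ioc_mem_nhdsGT one_pos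
  have hsub : Tendsto (fun x : ℝ => 1 - x) (𝓝[>] 0) (𝓝[Icc 0 1] 1) := by
    refine tendsto_nhdsWithin_iff.2 ⟨?_, ?_⟩
    · exact ((continuous_sub_left (1:ℝ)).tendsto' 0 1 (sub_zero 1)).mono_left nhdsWithin_le_nhds
    · filter_upwards [hIoc] with x hx using ⟨by linarith [hx.2], by linarith [hx.1]⟩
  have hlim : Tendsto (fun x => Real.sqrt (c * fhat (1 - x))) (𝓝[>] 0) (𝓝 (Real.sqrt c)) := by
    simpa [hf1] using ((hfc 1 (by simp)).tendsto.comp hsub).const_mul c |>.sqrt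
  refine (hlim.pos_mul_atTop (Real.sqrt_pos.2 hc) hσ).congr' ?_
  filter_upwards [hIoc] with x hx
  rw [← Real.sqrt_mul (mul_nonneg hc.le (hfnn _ ⟨by linarith [hx.2], by linarith [hx.1]⟩))]

/-- The intercept `2 ∫₀ˣ √𝔡` is strictly increasing in `x`, so a small intercept forces `x` to be
small, where a slope tending to `∞` at `0⁺` is large. -/
lemma exists_pos_forall_intercept_lt_imp (hdc : ContinuousOn dd (Icc 0 1))
    (hdnn : ∀ t ∈ Icc (0:ℝ) 1, 0 ≤ dd t) (hdz : ∀ t ∈ Icc (0:ℝ) 1, (dd t = 0 ↔ t = 0))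
    {B : ℝ → ℝ} (hB : Tendsto B (𝓝[>] 0) atTop) (M : ℝ) :
    ∃ δ > 0, ∀ x ∈ Ioc (0:ℝ) 1, 2 * (Psi dd 1 - Psi dd (1 - x)) < δ → M ≤ B x := by
  obtain ⟨u, hu, hMB⟩ := mem_nhdsGT_iff_exists_Ioc_subset.1 (hB.eventually_ge_atTop M)
  have hint : ∀ x ∈ Icc (0:ℝ) 1, IntervalIntegrable (fun t => Real.sqrt (dd t)) volume 0 x :=
    fun x hx => ContinuousOn.intervalIntegrable_of_Icc hx.1
      (hdc.sqrt.mono (Icc_subset_Icc le_rfl hx.2))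
  set x₁ := min u 1
  have hx₁ : 0 < x₁ := lt_min hu one_pos
  refine ⟨2 * ∫ t in (0:ℝ)..x₁, Real.sqrt (dd t), ?_, fun x hx hlt => hMB ⟨hx.1, ?_⟩⟩
  · refine mul_pos two_pos (intervalIntegral_pos_of_pos_on (hint _ ⟨hx₁.le, min_le_right _ _⟩)
      (fun t ht => ?_) hx₁)
    have ht' : t ∈ Icc (0:ℝ) 1 := ⟨ht.1.le, ht.2.le.trans (min_le_right _ _)⟩
    exact Real.sqrt_pos.2 ((hdnn t ht').lt_of_ne fun h => ht.1.ne' ((hdz t ht').1 h.symm))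
  · by_contra! hux
    rw [Psi_one_sub_Psi_one_sub hdc ⟨hx.1.le, hx.2⟩] at hlt
    refine hlt.not_ge (mul_le_mul_of_nonneg_left (integral_mono_interval le_rfl hx₁.le
      ((min_le_left _ _).trans hux.le) ?_ (hint x ⟨hx.1.le, hx.2⟩)) two_pos.le)
    exact ae_of_all _ fun t => Real.sqrt_nonneg _

end Ghat

theorem stmt14_general (dd fhat Q : ℝ → ℝ) (c : ℝ) (hc : 0 < c)
    (hfc : ContinuousOn fhat (Icc 0 1))
    (hdc : ContinuousOn dd (Icc 0 1))
    (hfnn : ∀ t ∈ Icc (0:ℝ) 1, 0 ≤ fhat t) (hQnn : ∀ t ∈ Icc (0:ℝ) 1, 0 ≤ Q t)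
    (hdnn : ∀ t ∈ Icc (0:ℝ) 1, 0 ≤ dd t) (hf1 : fhat 1 = 1)
    (hfz : ∀ t ∈ Icc (0:ℝ) 1, (fhat t = 0 ↔ t = 0))
    (hdz : ∀ t ∈ Icc (0:ℝ) 1, (dd t = 0 ↔ t = 0))
    (hσ : Tendsto (fun t => Real.sqrt (dd t / Q t)) (𝓝[>] (0:ℝ)) atTop) :
    (∀ s ≥ (0:ℝ), surfG dd fhat Q c s ≤ ghat dd fhat Q c s) ∧
    ConcaveOn ℝ (Ici 0) (ghat dd fhat Q c) ∧
    MonotoneOn (ghat dd fhat Q c) (Ici 0) ∧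
    ContinuousOn (ghat dd fhat Q c) (Ici 0) ∧
    (∀ s ≥ (0:ℝ), ghat dd fhat Q c s ≤ 2 * Psi dd 1) ∧
    Tendsto (fun s => ghat dd fhat Q c s / s) (𝓝[>] (0:ℝ)) atTop := by
  have hS : (Ioc (0:ℝ) 1).Nonempty := nonempty_Ioc.2 one_pos
  have hA : ∀ x ∈ Ioc (0:ℝ) 1, 0 ≤ 2 * (Psi dd 1 - Psi dd (1 - x)) := fun x hx => by
    rw [Psi_one_sub_Psi_one_sub hdc ⟨hx.1.le, hx.2⟩]
    exact mul_nonneg two_pos.le (integral_nonneg hx.1.le fun _ _ => Real.sqrt_nonneg _)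
  have hB : ∀ x ∈ Ioc (0:ℝ) 1, 0 ≤ Real.sqrt (c * fhat (1 - x) * (dd x / Q x)) :=
    fun _ _ => Real.sqrt_nonneg _
  rw [ghat_eq_lowerEnvelope]
  refine ⟨fun s hs => le_lowerEnvelope hS fun x hx => surfG_le_of_mem_Ioc hdc hfnn hQnn hs hx,
    concaveOn_lowerEnvelope hA hB hS, monotoneOn_lowerEnvelope hA hB hS,
    continuousOn_lowerEnvelope hA hB hS, fun s hs => ?_,
    tendsto_lowerEnvelope_div_atTop hA hB hS (exists_pos_forall_intercept_lt_imp hdc hdnn hdz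
      (tendsto_sqrt_mul_div_atTop hc hfc hfnn hf1 hσ))⟩
  -- the endpoint `x = 1`: zero slope since `f̂(0) = 0`, intercept `2Ψ(1)`
  refine (lowerEnvelope_le hA hB hs (right_mem_Ioc.2 one_pos)).trans_eq ?_
  simp [(hfz 0 (left_mem_Icc.2 zero_le_one)).2 rfl, Psi]

/-- In the case `σ̄ = ∞`: `g ≤ ĝ` on `[0,∞)`, and `ĝ` is concave, non-decreasing,
continuous, bounded by `2Ψ(1)`, with `ĝ(s)/s → ∞` as `s → 0⁺`. -/
theorem stmt14 (dd fhat Q : ℝ → ℝ) (c : ℝ) (hc : 0 < c)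
    (hfc : ContinuousOn fhat (Icc 0 1)) (hQc : ContinuousOn Q (Icc 0 1))
    (hdc : ContinuousOn dd (Icc 0 1))
    (hfnn : ∀ t ∈ Icc (0:ℝ) 1, 0 ≤ fhat t) (hQnn : ∀ t ∈ Icc (0:ℝ) 1, 0 ≤ Q t)
    (hdnn : ∀ t ∈ Icc (0:ℝ) 1, 0 ≤ dd t) (hf1 : fhat 1 = 1)
    (hfz : ∀ t ∈ Icc (0:ℝ) 1, (fhat t = 0 ↔ t = 0))
    (hQz : ∀ t ∈ Icc (0:ℝ) 1, (Q t = 0 ↔ t = 0))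
    (hdz : ∀ t ∈ Icc (0:ℝ) 1, (dd t = 0 ↔ t = 0))
    (hσ : Tendsto (fun t => Real.sqrt (dd t / Q t)) (𝓝[>] (0:ℝ)) atTop) :
    (∀ s ≥ (0:ℝ), surfG dd fhat Q c s ≤ ghat dd fhat Q c s) ∧
    ConcaveOn ℝ (Ici 0) (ghat dd fhat Q c) ∧
    MonotoneOn (ghat dd fhat Q c) (Ici 0) ∧
    ContinuousOn (ghat dd fhat Q c) (Ici 0) ∧
    (∀ s ≥ (0:ℝ), ghat dd fhat Q c s ≤ 2 * Psi dd 1) ∧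
    Tendsto (fun s => ghat dd fhat Q c s / s) (𝓝[>] (0:ℝ)) atTop :=
  stmt14_general dd fhat Q c hc hfc hdc hfnn hQnn hdnn hf1 hfz hdz hσ
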